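/- arXiv:1408.0512 — 3 statements merged into one kernel-verified Lean document; each statement's English description precedes it below -/
import Mathlib

section
/- For an odd prime p and integer k with 0 ≤ k ≤ (p-1)/2, the q-binomial coefficient [((p-1)/2 + k) choose 2k] with base q^2 is congruent to (-1)^k · [2k choose k]_{q^2} · q^{kp - k^2} / ((-q;q)_{2k})^2 modulo Φ where Φ = (1 + q + ... + q^{p-1})^2, as an identity of rational functions in q whose denominators are coprime to 1+q+...+q^{p-1}. -/
/-! Write `p = 2(k + d) + 1`. The numerator of the left side pairs up as
`∏_{j<k} (1 - q^(p-a))(1 - q^(p+a))` with `a = 2j + 1`, and modulo `(q^p - 1)^2` each pair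
satisfies `(1 - q^(p-a))(1 - q^(p+a)) q^a ≡ -q^p (1 - q^a)^2`. Since
`(q²;q²)_{2k} = (q;q²)_k (q²;q²)_k (-q;q)_{2k}`, the right side equals
`(-1)^k q^(kp-k²) (q;q²)_k² / (q²;q²)_{2k}`, which has the denominator of the left side;
that denominator is prime to `Φ_p`, as `p ∤ 2i` for `0 < i < p`. -/

open Finset Polynomial

noncomputable def qP {K : Type*} [Field K] (a q : K) (n : ℕ) : K :=
  ∏ i ∈ Finset.range n, (1 - a * q ^ i)

noncomputable def qBin {K : Type*} [Field K] (q : K) (n k : ℕ) : K :=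
  if k ≤ n then qP (q ^ (n - k + 1)) q k / qP q q k else 0

noncomputable def qq : RatFunc ℚ := RatFunc.X

noncomputable def Phi (p : ℕ) : Polynomial ℚ := ∑ i ∈ Finset.range p, Polynomial.X ^ i

/-- `f ≡ g (mod (Phi p)^r)`: the difference, as a rational function with denominator
coprime to `Phi p`, has numerator divisible by `(Phi p)^r`. -/
def CongrModPow (f g : RatFunc ℚ) (p r : ℕ) : Prop :=
  ∃ A B : Polynomial ℚ, IsCoprime B (Phi p) ∧
    (f - g) * algebraMap (Polynomial ℚ) (RatFunc ℚ) B =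
      algebraMap (Polynomial ℚ) (RatFunc ℚ) ((Phi p) ^ r * A)

/-- The product `(a;q)_n` of `qP`, over a commutative ring instead of a field, so that it can be
formed in `ℚ[X]`. -/
def qPoch {R : Type*} [CommRing R] (a q : R) (n : ℕ) : R :=
  ∏ i ∈ range n, (1 - a * q ^ i)

section qPoch

variable {R S : Type*} [CommRing R] [CommRing S]

lemma qPoch_succ (a q : R) (n : ℕ) : qPoch a q (n + 1) = qPoch a q n * (1 - a * q ^ n) :=
  prod_range_succ _ _

lemma qPoch_succ' (a q : R) (n : ℕ) : qPoch a q (n + 1) = (1 - a) * qPoch (a * q) q n := by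
  simp only [qPoch, prod_range_succ', pow_succ, pow_zero, mul_one, mul_assoc, mul_comm q]
  ring

lemma qPoch_add (a q : R) (m n : ℕ) :
    qPoch a q (m + n) = qPoch a q m * qPoch (a * q ^ m) q n := by
  simp only [qPoch, prod_range_add, pow_add, mul_assoc]

lemma qPoch_two_mul (a q : R) (n : ℕ) :
    qPoch a q (2 * n) = qPoch a (q ^ 2) n * qPoch (a * q) (q ^ 2) n := by
  induction n with
  | zero => simp [qPoch]
  | succ n ih =>
    rw [show 2 * (n + 1) = 2 * n + 1 + 1 by ring, qPoch_succ, qPoch_succ, ih, qPoch_succ,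
      qPoch_succ]
    ring

lemma qPoch_mul_qPoch_neg (q : R) (n : ℕ) :
    qPoch q q n * qPoch (-q) q n = qPoch (q ^ 2) (q ^ 2) n := by
  simp only [qPoch, ← prod_mul_distrib]
  exact prod_congr rfl fun i _ => by ring

lemma map_qPoch (f : R →+* S) (a q : R) (n : ℕ) : f (qPoch a q n) = qPoch (f a) (f q) n := by
  simp [qPoch]

end qPoch

lemma qP_eq_qPoch {K : Type*} [Field K] (a q : K) (n : ℕ) : qP a q n = qPoch a q n := rfl

section qBin

variable {K : Type*} [Field K]

lemma qBin_add_self (q : K) (n d : ℕ) :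
    qBin q (n + d) n = qP (q ^ (d + 1)) q n / qP q q n := by
  rw [qBin, if_pos (Nat.le_add_right n d), Nat.add_sub_cancel_left]

lemma qBin_central_div_sq (q : K) (k : ℕ) (hD : qP (q ^ 2) (q ^ 2) (2 * k) ≠ 0) :
    qBin (q ^ 2) (2 * k) k / qP (-q) q (2 * k) ^ 2 =
      qP q (q ^ 2) k ^ 2 / qP (q ^ 2) (q ^ 2) (2 * k) := by
  rw [two_mul k, qBin_add_self, ← two_mul]
  simp only [qP_eq_qPoch] at hD ⊢
  have h_add : qPoch (q ^ 2) (q ^ 2) (2 * k) =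
      qPoch (q ^ 2) (q ^ 2) k * qPoch ((q ^ 2) ^ (k + 1)) (q ^ 2) k := by
    rw [two_mul, qPoch_add, ← pow_succ']
  have h_split : qPoch (q ^ 2) (q ^ 2) (2 * k) =
      qPoch q (q ^ 2) k * qPoch (q ^ 2) (q ^ 2) k * qPoch (-q) q (2 * k) := by
    rw [← qPoch_mul_qPoch_neg, qPoch_two_mul, ← sq]
  set E := qPoch (q ^ 2) (q ^ 2) k
  set C := qPoch ((q ^ 2) ^ (k + 1)) (q ^ 2) k
  set O := qPoch q (q ^ 2) k
  set P := qPoch (-q) q (2 * k)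
  have hE : E ≠ 0 := by rw [h_add] at hD; exact left_ne_zero_of_mul hD
  have hP : P ≠ 0 := by rw [h_split] at hD; exact right_ne_zero_of_mul hD
  rw [div_div, div_eq_div_iff (mul_ne_zero hE (pow_ne_zero 2 hP)) hD]
  linear_combination (C + O * P) * h_split - O * P * h_add

end qBin

section Congruence

variable {R : Type*} [CommRing R]

lemma one_sub_mul_one_sub_mul_smodEq {u a x : R} (h : u * a = x) :
    (1 - u) * (1 - x * a) * a ≡ -x * (1 - a) ^ 2 [SMOD Ideal.span {(x - 1) ^ 2}] := by
  rw [SModEq.sub_mem, Ideal.mem_span_singleton']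
  exact ⟨a, by subst h; ring⟩

lemma qPoch_mul_pow_smodEq (t : R) (k d : ℕ) {p : ℕ} (hp : p = 2 * (k + d) + 1) :
    qPoch ((t ^ 2) ^ (d + 1)) (t ^ 2) (2 * k) * t ^ (k ^ 2) ≡
      (-1) ^ k * t ^ (k * p) * qPoch t (t ^ 2) k ^ 2 [SMOD Ideal.span {(t ^ p - 1) ^ 2}] := by
  -- Peeling off the outermost pair of factors turns `(k + 1, d)` into `(k, d + 1)`, same `p`.
  induction k generalizing d with
  | zero => simp [qPoch]
  | succ k ih =>
    have h_pair := one_sub_mul_one_sub_mul_smodEq (u := (t ^ 2) ^ (d + 1)) (a := t ^ (2 * k + 1))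
      (x := t ^ p) (by rw [hp]; ring)
    have := (ih (d + 1) (by rw [hp]; ring)).mul h_pair
    convert this using 1
    · rw [show 2 * (k + 1) = 2 * k + 1 + 1 by ring, qPoch_succ, qPoch_succ', hp]
      ring_nf
    · rw [qPoch_succ]; ring

end Congruence

lemma Phi_eq_cyclotomic {p : ℕ} (hp : p.Prime) : Phi p = cyclotomic p ℚ := by
  have : Fact p.Prime := ⟨hp⟩
  rw [cyclotomic_prime, Phi]

lemma isCoprime_X_pow_sub_one_cyclotomic {n p : ℕ} (hn : 0 < n) (hpn : ¬p ∣ n) :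
    IsCoprime (X ^ n - 1 : ℚ[X]) (cyclotomic p ℚ) := by
  rw [← prod_cyclotomic_eq_X_pow_sub_one hn]
  exact IsCoprime.prod_left fun d hd =>
    cyclotomic.isCoprime_rat fun hdp => hpn (hdp ▸ Nat.dvd_of_mem_divisors hd)

lemma isCoprime_X_cyclotomic {p : ℕ} (hp : 1 < p) :
    IsCoprime (X : ℚ[X]) (cyclotomic p ℚ) := by
  rw [irreducible_X.coprime_iff_not_dvd, X_dvd_iff, cyclotomic_coeff_zero ℚ hp]
  exact one_ne_zero

lemma isCoprime_qPoch_X_sq_cyclotomic {p n : ℕ} (hp : p.Prime) (hp2 : p ≠ 2) (hn : n < p) :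
    IsCoprime (qPoch (X ^ 2 : ℚ[X]) (X ^ 2) n) (cyclotomic p ℚ) := by
  refine IsCoprime.prod_left fun i hi => ?_
  rw [mem_range] at hi
  rw [← pow_succ', ← pow_mul, ← neg_sub]
  refine (isCoprime_X_pow_sub_one_cyclotomic (by positivity) fun hdvd => ?_).neg_left
  rcases hp.dvd_mul.1 hdvd with h | h
  · exact hp2 ((Nat.prime_dvd_prime_iff_eq hp Nat.prime_two).1 h)
  · exact absurd (Nat.le_of_dvd (Nat.succ_pos _) h) (by omega)

lemma congrModPow_div_of_dvd {p r : ℕ} {N M D U : ℚ[X]} (hD : D ≠ 0)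
    (hcop : IsCoprime (D * U) (Phi p)) (hdvd : Phi p ^ r ∣ (N - M) * U) :
    CongrModPow (algebraMap ℚ[X] (RatFunc ℚ) N / algebraMap ℚ[X] (RatFunc ℚ) D)
      (algebraMap ℚ[X] (RatFunc ℚ) M / algebraMap ℚ[X] (RatFunc ℚ) D) p r := by
  obtain ⟨A, hA⟩ := hdvd
  refine ⟨A, D * U, hcop, ?_⟩
  have hD' : algebraMap ℚ[X] (RatFunc ℚ) D ≠ 0 :=
    (map_ne_zero_iff _ (RatFunc.algebraMap_injective ℚ)).2 hD
  rw [← hA, map_mul, map_mul, map_sub]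
  field_simp

lemma qq_eq_algebraMap_X : qq = algebraMap ℚ[X] (RatFunc ℚ) X := RatFunc.algebraMap_X.symm

lemma qPoch_X_sq_ne_zero (n : ℕ) : qPoch (X ^ 2 : ℚ[X]) (X ^ 2) n ≠ 0 := fun h => by
  simpa [qPoch, eval_prod] using congrArg (eval 0) h

lemma qBin_qq_sq_add_self (n d : ℕ) :
    qBin (qq ^ 2) (n + d) n =
      algebraMap ℚ[X] (RatFunc ℚ) (qPoch ((X ^ 2) ^ (d + 1)) (X ^ 2) n) /
        algebraMap ℚ[X] (RatFunc ℚ) (qPoch (X ^ 2) (X ^ 2) n) := by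
  simp only [qBin_add_self, qP_eq_qPoch, map_qPoch, map_pow, qq_eq_algebraMap_X]

lemma neg_one_pow_mul_qBin_qq_sq_div_eq (k e : ℕ) :
    (-1) ^ k * qBin (qq ^ 2) (2 * k) k * qq ^ e / qP (-qq) qq (2 * k) ^ 2 =
      algebraMap ℚ[X] (RatFunc ℚ) ((-1) ^ k * X ^ e * qPoch X (X ^ 2) k ^ 2) /
        algebraMap ℚ[X] (RatFunc ℚ) (qPoch (X ^ 2) (X ^ 2) (2 * k)) := by
  have hD : qP (qq ^ 2) (qq ^ 2) (2 * k) ≠ 0 := by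
    rw [qP_eq_qPoch, qq_eq_algebraMap_X, ← map_pow, ← map_qPoch,
      map_ne_zero_iff _ (RatFunc.algebraMap_injective ℚ)]
    exact qPoch_X_sq_ne_zero _
  rw [mul_right_comm, mul_div_assoc, qBin_central_div_sq qq k hD, qP_eq_qPoch, qP_eq_qPoch,
    qq_eq_algebraMap_X]
  simp only [map_mul, map_pow, map_neg, map_one, map_qPoch]
  ring

theorem stmt_0 (p : ℕ) (hp : p.Prime) (hodd : Odd p) (k : ℕ) (hk : k ≤ (p - 1) / 2) :
    CongrModPow (qBin (qq ^ 2) ((p - 1) / 2 + k) (2 * k))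
      ((-1) ^ k * qBin (qq ^ 2) (2 * k) k * qq ^ (k * p - k ^ 2) /
        (qP (-qq) qq (2 * k)) ^ 2) p 2 := by
  obtain ⟨d, hd⟩ := Nat.exists_eq_add_of_le hk
  have hpkd : p = 2 * (k + d) + 1 := by obtain ⟨m, rfl⟩ := hodd; omega
  rw [hd, add_right_comm, ← two_mul, qBin_qq_sq_add_self, neg_one_pow_mul_qBin_qq_sq_div_eq]
  refine congrModPow_div_of_dvd (qPoch_X_sq_ne_zero _) ?_ (U := X ^ (k ^ 2)) ?_
  · rw [Phi_eq_cyclotomic hp]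
    exact (isCoprime_qPoch_X_sq_cyclotomic hp (by omega) (by omega)).mul_left
      (isCoprime_X_cyclotomic hp.one_lt).pow_left
  · have hcongr := qPoch_mul_pow_smodEq (X : ℚ[X]) k d hpkd
    rw [SModEq.sub_mem, Ideal.mem_span_singleton] at hcongr
    have hexp : (X : ℚ[X]) ^ (k * p - k ^ 2) * X ^ (k ^ 2) = X ^ (k * p) := by
      rw [← pow_add, Nat.sub_add_cancel (by rw [sq]; exact Nat.mul_le_mul_left k (by omega))]
    have hPhi : Phi p ∣ X ^ p - 1 := Phi_eq_cyclotomic hp ▸ cyclotomic.dvd_X_pow_sub_one p ℚ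
    refine (pow_dvd_pow_of_dvd hPhi 2).trans ?_
    convert hcongr using 1
    linear_combination (-(-1) ^ k * qPoch (X : ℚ[X]) (X ^ 2) k ^ 2) * hexp
end

section
/- Let n be a nonnegative integer. Then Σ_{k=0}^{n} (-1)^{n-k} [n choose k]_q · (aq^n;q)_k · q^{binom(n-k+1,2)} / ((a;q)_k (1 - x q^{-k})) = (ax;q)_n (q;q)_n / ((a;q)_n (x q^{-n}; q)_{n+1}), as an identity of rational functions in q, a, x. -/
/-!
The left side is a partial-fraction expansion in `x` with simple poles at `x = q ^ k`,
`0 ≤ k ≤ n`. Over the common denominator `∏ j ≤ n, (1 - x / q ^ j) = (x q⁻ⁿ; q)ₙ₊₁` it says that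
the polynomial `(q;q)ₙ / (a;q)ₙ · (a x; q)ₙ`, of degree `n`, is the interpolant of its values at
the `n + 1` nodes `q ^ k`. At the node `q ^ k` only the `k`-th summand survives, and its value
collapses by `(a;q)ₙ (a qⁿ;q)ₖ = (a;q)ₖ (a qᵏ;q)ₙ` and `(q;q)ₙ = (q;q)ₙ₋ₖ (qⁿ⁻ᵏ⁺¹;q)ₖ`.
-/

open Finset Polynomial

/-- The field of rational functions in three variables `q3`, `a3`, `x3` over `ℚ`. -/
noncomputable def q3 : RatFunc (RatFunc (RatFunc ℚ)) := RatFunc.C (RatFunc.C RatFunc.X)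
noncomputable def a3 : RatFunc (RatFunc (RatFunc ℚ)) := RatFunc.C RatFunc.X
noncomputable def x3 : RatFunc (RatFunc (RatFunc ℚ)) := RatFunc.X

section QPochhammer

variable {K : Type*} [Field K] {a q : K}

theorem qP_add (a q : K) (m l : ℕ) : qP a q (m + l) = qP a q m * qP (a * q ^ m) q l := by
  rw [qP, prod_range_add]
  congr 1
  exact prod_congr rfl fun i _ => by rw [pow_add, mul_assoc]

theorem qP_ne_zero {n : ℕ} (h : ∀ i < n, 1 - a * q ^ i ≠ 0) : qP a q n ≠ 0 :=
  prod_ne_zero_iff.2 fun i hi => h i (mem_range.1 hi)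

theorem qP_ne_zero_of_le {m n : ℕ} (hmn : m ≤ n) (h : qP a q n ≠ 0) : qP a q m ≠ 0 := by
  obtain ⟨l, rfl⟩ := Nat.exists_eq_add_of_le hmn
  rw [qP_add] at h
  exact left_ne_zero_of_mul h

theorem pow_ne_one_of_qP_ne_zero {n d : ℕ} (h : qP q q n ≠ 0) (hd : 0 < d) (hdn : d ≤ n) :
    q ^ d ≠ 1 := by
  obtain ⟨e, rfl⟩ := Nat.exists_eq_add_of_lt hd
  have := prod_ne_zero_iff.1 h e (mem_range.2 (by omega))
  rw [← pow_succ'] at this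
  exact fun h1 => this (by rw [← h1, zero_add, sub_self])

theorem injOn_pow_of_qP_ne_zero {n : ℕ} (hq : q ≠ 0) (h : qP q q n ≠ 0) :
    Set.InjOn (q ^ ·) (range (n + 1) : Set ℕ) := by
  have hlt : ∀ i j, i < j → j ≤ n → q ^ i ≠ q ^ j := fun i j hij hjn hij' =>
    pow_ne_one_of_qP_ne_zero h (Nat.sub_pos_of_lt hij) (by omega) <| by
      rw [pow_sub₀ q hq hij.le, ← hij', mul_inv_cancel₀ (pow_ne_zero _ hq)]
  intro i hi j hj hij
  simp only [coe_range, Set.mem_Iio] at hi hj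
  rcases lt_trichotomy i j with h | h | h
  · exact absurd hij (hlt i j h (by omega))
  · exact h
  · exact absurd hij.symm (hlt j i h (by omega))

theorem qP_mul_zpow_neg (hq : q ≠ 0) (x : K) (n : ℕ) :
    qP (x * q ^ (-(n : ℤ))) q (n + 1) = ∏ j ∈ range (n + 1), (1 - x / q ^ j) := by
  rw [qP, ← prod_range_reflect (fun j => 1 - x / q ^ j)]
  refine prod_congr rfl fun i hi => ?_
  have hn : q ^ n = q ^ (n + 1 - 1 - i) * q ^ i := by
    rw [← pow_add]; congr 1; have := mem_range.1 hi; omega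
  rw [zpow_neg, zpow_natCast, hn]
  field_simp

theorem prod_range_one_sub_pow_div (hq : q ≠ 0) (k : ℕ) :
    ∏ j ∈ range k, (1 - q ^ k / q ^ j) = qP q q k := by
  rw [qP, ← prod_range_reflect (fun i => 1 - q * q ^ i)]
  refine prod_congr rfl fun j hj => ?_
  rw [← pow_succ', div_eq_mul_inv, ← pow_sub₀ q hq (mem_range.1 hj).le]
  congr 2
  have := mem_range.1 hj
  omega

theorem prod_range_one_sub_inv_pow (hq : q ≠ 0) (d : ℕ) :
    ∏ i ∈ range d, (1 - (q ^ (i + 1))⁻¹) = (-1) ^ d * qP q q d / q ^ ((d + 1) * d / 2) := by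
  have hfactor : ∀ i : ℕ, 1 - (q ^ (i + 1))⁻¹ = -1 * (1 - q * q ^ i) / q ^ (i + 1) := fun i => by
    rw [← pow_succ']; field_simp; ring
  have hgauss : ∑ i ∈ range d, (i + 1) = (d + 1) * d / 2 := by
    have := sum_range_succ' (fun i => i) d
    simp only [add_zero] at this
    rw [← this, sum_range_id, Nat.add_sub_cancel, mul_comm]
  rw [prod_congr rfl fun i _ => hfactor i, prod_div_distrib, prod_mul_distrib, prod_const,
    card_range, prod_pow_eq_pow_sum, hgauss, qP]

theorem prod_erase_one_sub_pow_div (hq : q ≠ 0) {n k : ℕ} (hk : k ≤ n) :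
    ∏ j ∈ (range (n + 1)).erase k, (1 - q ^ k / q ^ j) =
      (-1) ^ (n - k) * qP q q k * qP q q (n - k) / q ^ ((n - k + 1) * (n - k) / 2) := by
  have hsplit : (range (n + 1)).erase k = range k ∪ Ico (k + 1) (k + 1 + (n - k)) := by
    ext j; simp only [mem_erase, mem_range, mem_union, mem_Ico]; omega
  have hdisj : Disjoint (range k) (Ico (k + 1) (k + 1 + (n - k))) :=
    disjoint_left.2 fun j hj hj' => by simp only [mem_range, mem_Ico] at hj hj'; omega
  have hupper : ∀ i : ℕ, 1 - q ^ k / q ^ (k + 1 + i) = 1 - (q ^ (i + 1))⁻¹ := fun i => by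
    rw [add_assoc, add_comm 1 i, pow_add, div_mul_cancel_left₀ (pow_ne_zero _ hq)]
  rw [hsplit, prod_union hdisj, prod_Ico_eq_prod_range, Nat.add_sub_cancel_left,
    prod_congr rfl fun i _ => hupper i, prod_range_one_sub_pow_div hq,
    prod_range_one_sub_inv_pow hq]
  ring

theorem qBin_term_mul_prod_erase (hq : q ≠ 0) {n k : ℕ} (hqq : qP q q n ≠ 0)
    (ha : qP a q n ≠ 0) (hk : k ≤ n) :
    (-1) ^ (n - k) * qBin q n k * qP (a * q ^ n) q k * q ^ ((n - k + 1) * (n - k) / 2) /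
        qP a q k * ∏ j ∈ (range (n + 1)).erase k, (1 - q ^ k / q ^ j) =
      qP q q n / qP a q n * qP (a * q ^ k) q n := by
  have hqn : qP q q n = qP q q (n - k) * qP (q ^ (n - k + 1)) q k := by
    conv_lhs => rw [← Nat.sub_add_cancel hk, qP_add, ← pow_succ']
  have han : qP a q n * qP (a * q ^ n) q k = qP a q k * qP (a * q ^ k) q n := by
    rw [← qP_add, ← qP_add, add_comm]
  have hsign : ((-1 : K) ^ (n - k)) ^ 2 = 1 := by rw [← pow_mul, pow_mul', neg_one_sq, one_pow]
  have hqk := qP_ne_zero_of_le hk hqq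
  have hqd := qP_ne_zero_of_le (Nat.sub_le n k) hqq
  have hak := qP_ne_zero_of_le hk ha
  rw [prod_erase_one_sub_pow_div hq hk, qBin, if_pos hk]
  field_simp
  linear_combination
    (qP (q ^ (n - k + 1)) q k * qP (a * q ^ n) q k * qP q q (n - k) * qP a q n) * hsign +
      (qP (q ^ (n - k + 1)) q k * qP q q (n - k)) * han - (qP a q k * qP (a * q ^ k) q n) * hqn

end QPochhammer

section PartialFractions

variable {K ι : Type*} [Field K]

theorem degree_prod_one_sub_C_mul_X_le (s : Finset ι) (w : ι → K) :
    (∏ j ∈ s, (1 - C (w j) * X)).degree ≤ (#s : WithBot ℕ) := by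
  have hfactor : ∀ j ∈ s, (1 - C (w j) * X).degree ≤ 1 := fun j _ =>
    (degree_sub_le _ _).trans (max_le (degree_one_le.trans zero_le_one) (degree_C_mul_X_le _))
  refine (degree_prod_le _ _).trans ((sum_le_sum hfactor).trans ?_)
  simp

variable [DecidableEq ι] {s : Finset ι} {t c : ι → K}

theorem sum_C_mul_prod_erase_eq_of_eval_eq {p : K[X]} (ht : Set.InjOn t s)
    (ht0 : ∀ k ∈ s, t k ≠ 0) (hp : p.degree < #s)
    (hc : ∀ k ∈ s, c k * ∏ j ∈ s.erase k, (1 - t k / t j) = p.eval (t k)) :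
    ∑ k ∈ s, C (c k) * ∏ j ∈ s.erase k, (1 - C (t j)⁻¹ * X) = p := by
  refine Polynomial.eq_of_degrees_lt_of_eval_index_eq s ht ?_ hp fun k hk => ?_
  · refine (degree_sum_le _ _).trans_lt
      ((Finset.sup_lt_iff (WithBot.bot_lt_coe _)).2 fun k hk => ?_)
    refine (degree_mul_le _ _).trans_lt ?_
    refine (add_le_add degree_C_le (degree_prod_one_sub_C_mul_X_le _ _)).trans_lt ?_
    rw [zero_add, card_erase_of_mem hk, Nat.cast_lt]
    exact Nat.sub_lt (card_pos.2 ⟨k, hk⟩) one_pos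
  · simp only [eval_finsetSum, eval_mul, eval_C, eval_prod, eval_sub, eval_one, eval_X]
    rw [sum_eq_single_of_mem k hk fun j hj hjk => ?_, ← hc k hk]
    · simp only [inv_mul_eq_div]
    · refine mul_eq_zero_of_right _ (prod_eq_zero (mem_erase.2 ⟨Ne.symm hjk, hk⟩) ?_)
      rw [inv_mul_cancel₀ (ht0 k hk), sub_self]

theorem sum_div_one_sub_div_eq_of_eval_eq {p : K[X]} (ht : Set.InjOn t s)
    (ht0 : ∀ k ∈ s, t k ≠ 0) (hp : p.degree < #s)
    (hc : ∀ k ∈ s, c k * ∏ j ∈ s.erase k, (1 - t k / t j) = p.eval (t k)) {x : K}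
    (hx : ∏ j ∈ s, (1 - x / t j) ≠ 0) :
    ∑ k ∈ s, c k / (1 - x / t k) = p.eval x / ∏ j ∈ s, (1 - x / t j) := by
  rw [eq_div_iff hx, sum_mul, ← sum_C_mul_prod_erase_eq_of_eval_eq ht ht0 hp hc]
  simp only [eval_finsetSum, eval_mul, eval_C, eval_prod, eval_sub, eval_one, eval_X,
    inv_mul_eq_div]
  refine sum_congr rfl fun k hk => ?_
  rw [← mul_prod_erase s _ hk, ← mul_assoc, div_mul_cancel₀ _ (prod_ne_zero_iff.1 hx k hk)]

end PartialFractions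

theorem sum_qBin_div_one_sub_mul_zpow_neg {K : Type*} [Field K] {a q : K} (x : K) (n : ℕ)
    (hq : q ≠ 0) (hqq : qP q q n ≠ 0) (ha : qP a q n ≠ 0)
    (hx : qP (x * q ^ (-(n : ℤ))) q (n + 1) ≠ 0) :
    ∑ k ∈ range (n + 1),
        (-1) ^ (n - k) * qBin q n k * qP (a * q ^ n) q k * q ^ ((n - k + 1) * (n - k) / 2) /
          (qP a q k * (1 - x * q ^ (-(k : ℤ)))) =
      qP (a * x) q n * qP q q n / (qP a q n * qP (x * q ^ (-(n : ℤ))) q (n + 1)) := by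
  set p : K[X] := C (qP q q n / qP a q n) * ∏ i ∈ range n, (1 - C (a * q ^ i) * X) with hp_def
  have hp_eval (y : K) : p.eval y = qP q q n / qP a q n * qP (a * y) q n := by
    simp only [hp_def, eval_mul, eval_C, eval_prod, eval_sub, eval_one, eval_X, qP]
    congr 1
    exact prod_congr rfl fun i _ => by ring
  have hp_degree : p.degree < #(range (n + 1)) := by
    refine (degree_mul_le _ _).trans_lt ?_
    refine (add_le_add degree_C_le (degree_prod_one_sub_C_mul_X_le _ _)).trans_lt ?_
    rw [zero_add, card_range, card_range]
    exact_mod_cast n.lt_succ_self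
  rw [qP_mul_zpow_neg hq] at hx ⊢
  have hpf := sum_div_one_sub_div_eq_of_eval_eq (injOn_pow_of_qP_ne_zero hq hqq)
    (fun _ _ => pow_ne_zero _ hq) hp_degree
    (fun k hk => by
      rw [hp_eval]; exact qBin_term_mul_prod_erase hq hqq ha (mem_range_succ_iff.1 hk)) hx
  simp only [zpow_neg, zpow_natCast, ← div_eq_mul_inv, ← div_div]
  rw [hpf, hp_eval]
  field_simp

namespace RatFunc

variable {K : Type*} [Field K]

theorem one_sub_X_mul_algebraMap_ne_zero (p : K[X]) :
    1 - X * algebraMap K[X] (RatFunc K) p ≠ 0 := by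
  rw [← algebraMap_X, ← map_mul, ← map_one (algebraMap K[X] (RatFunc K)), ← map_sub,
    map_ne_zero_iff _ (algebraMap_injective K)]
  intro h
  simpa using congrArg (coeff · 0) h

theorem one_sub_X_mul_C_ne_zero (e : K) : 1 - X * C e ≠ 0 := by
  simpa only [algebraMap_C] using one_sub_X_mul_algebraMap_ne_zero (Polynomial.C e)

theorem qP_X_mul_C_zpow_ne_zero (r : K) (z : ℤ) (m : ℕ) : qP (X * C r ^ z) (C r) m ≠ 0 :=
  qP_ne_zero fun i _ => by
    rw [mul_assoc, ← map_zpow₀, ← map_pow, ← map_mul]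
    exact one_sub_X_mul_C_ne_zero _

end RatFunc

theorem q3_ne_zero : q3 ≠ 0 := by
  simp [q3, RatFunc.X_ne_zero]

theorem qP_q3_q3_ne_zero (n : ℕ) : qP q3 q3 n ≠ 0 := by
  refine qP_ne_zero fun i _ => ?_
  have h := RatFunc.one_sub_X_mul_algebraMap_ne_zero (X ^ i : ℚ[X])
  rw [map_pow, RatFunc.algebraMap_X, ← pow_succ'] at h
  rw [q3, ← pow_succ', ← map_pow, ← map_pow, ← map_one RatFunc.C, ← map_sub,
    ← map_one RatFunc.C, ← map_sub]
  exact (_root_.map_ne_zero _).2 ((_root_.map_ne_zero _).2 h)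

theorem qP_a3_q3_ne_zero (n : ℕ) : qP a3 q3 n ≠ 0 := by
  refine qP_ne_zero fun i _ => ?_
  rw [a3, q3, ← map_pow, ← map_pow, ← map_mul, ← map_one RatFunc.C, ← map_sub]
  exact (_root_.map_ne_zero _).2 (RatFunc.one_sub_X_mul_C_ne_zero _)

theorem stmt_6 (n : ℕ) :
    ∑ k ∈ Finset.range (n + 1),
        (-1) ^ (n - k) * qBin q3 n k * qP (a3 * q3 ^ n) q3 k *
            q3 ^ ((n - k + 1) * (n - k) / 2) /
          (qP a3 q3 k * (1 - x3 * q3 ^ (-(k : ℤ)))) =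
      qP (a3 * x3) q3 n * qP q3 q3 n /
        (qP a3 q3 n * qP (x3 * q3 ^ (-(n : ℤ))) q3 (n + 1)) :=
  sum_qBin_div_one_sub_mul_zpow_neg x3 n q3_ne_zero (qP_q3_q3_ne_zero n) (qP_a3_q3_ne_zero n)
    (RatFunc.qP_X_mul_C_zpow_ne_zero _ _ _)
end

section
/- Let p be an odd prime and m, r positive integers with p not dividing m and r < m. Let ⟨a⟩_p denote the least nonnegative residue. For any integer s with 0 ≤ s ≤ ⟨-(m-r)/m⟩_p (where -(m-r)/m is interpreted as the p-adic rational -(m-r)·m^{-1} mod p), the sum Σ_{k=0}^{p-s-1} (q^r;q^m)_k (q^{m-r};q^m)_{k+s} / ((q^m;q^m)_k (q^m;q^m)_{k+s}) is congruent to (-1)^{⟨-r/m⟩_p} · q^{-m·⟨-r/m⟩_p·(⟨-r/m⟩_p + 1)/2} modulo 1+q+...+q^{p-1}. -/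
/-!
Evaluate at a primitive `p`-th root of unity `ζ`. Both sides are regular there, and `Phi p` is
the minimal polynomial of `ζ`, so it suffices that their values agree. Put `ω = ζ ^ m`: the
conditions defining `t` and `t'` say `ζ ^ r = ω⁻ᵗ` and `ζ ^ (m - r) = ω⁻ᵗ'`, which forces
`t + t' + 1 = p`. Each quotient `(ω⁻ᵘ; ω)ₖ / (ω; ω)ₖ` is a signed power of `ω` times the
Gaussian binomial `[u, k]_ω`, so by `q`-Vandermonde the sum collapses to a multiple of
`[p - 1, t + s]_ω`, and at a primitive `p`-th root of unity
`[p - 1, j]_ω = (-1)ʲ ω^(-(j + 1).choose 2)`.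
-/

open Finset Polynomial

theorem Nat.choose_two_add (a b : ℕ) : (a + b).choose 2 = a.choose 2 + b.choose 2 + a * b := by
  induction b with
  | zero => simp
  | succ b ih =>
    rw [← add_assoc, Nat.choose_succ_succ', Nat.choose_succ_succ' b, ih]
    simp only [Nat.choose_one_right]
    ring

theorem Nat.two_mul_choose_two_add_self (n : ℕ) : 2 * n.choose 2 + n = n * n := by
  induction n with
  | zero => simp
  | succ n ih =>
    rw [Nat.choose_succ_succ', Nat.choose_one_right]
    linarith

section QPochhammer

variable {K : Type*} [Field K] {a q : K}

theorem qP_zero (a q : K) : qP a q 0 = 1 := prod_range_zero _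

theorem qP_succ (a q : K) (n : ℕ) : qP a q (n + 1) = qP a q n * (1 - a * q ^ n) :=
  prod_range_succ _ _

theorem qP_succ' (a q : K) (n : ℕ) : qP a q (n + 1) = (1 - a) * qP (a * q) q n := by
  simp only [qP, prod_range_succ', pow_zero, mul_one, pow_succ', mul_assoc, mul_comm]

theorem qP_one_left (q : K) {n : ℕ} (hn : n ≠ 0) : qP 1 q n = 0 :=
  prod_eq_zero (mem_range.2 (Nat.pos_of_ne_zero hn)) (by simp)

theorem qP_self_ne_zero {n : ℕ} (hq : ∀ j, 0 < j → j ≤ n → q ^ j ≠ 1) : qP q q n ≠ 0 :=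
  prod_ne_zero_iff.2 fun i hi => by
    rw [← pow_succ', sub_ne_zero]
    exact (hq (i + 1) i.succ_pos (mem_range.1 hi)).symm

theorem qP_self_mul_qP (q : K) (n k : ℕ) :
    qP q q n * qP (q ^ (n + 1)) q k = qP q q (n + k) := by
  simp only [qP, prod_range_add, ← pow_succ', ← pow_add, add_right_comm]

/-- If `a = q⁻ᵘ`, the factors `1 - a qⁱ` of `(a; q)ₖ` are, up to `-a qⁱ`, those of
`(q^(u-k+1); q)ₖ` in reverse order. -/
theorem qP_eq_of_mul_pow_eq_one {u : ℕ} (ha : a * q ^ u = 1) {k : ℕ} (hk : k ≤ u) :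
    qP a q k = (-a) ^ k * q ^ k.choose 2 * qP (q ^ (u - k + 1)) q k := by
  induction k with
  | zero => simp [qP_zero]
  | succ k ih =>
    have hsplit : q ^ k * q ^ (u - k) = q ^ u := by
      rw [← pow_add, Nat.add_sub_cancel' (by omega)]
    rw [qP_succ, ih (by omega), qP_succ', ← pow_succ, Nat.choose_succ_succ', Nat.choose_one_right,
      show u - (k + 1) + 1 = u - k by omega]
    linear_combination (-a) ^ k * q ^ k.choose 2 * qP (q ^ (u - k + 1)) q k * (-a * hsplit - ha)

theorem qBin_of_le {n k : ℕ} (h : k ≤ n) : qBin q n k = qP (q ^ (n - k + 1)) q k / qP q q k :=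
  if_pos h

theorem qBin_of_lt {n k : ℕ} (h : n < k) : qBin q n k = 0 := if_neg (by omega)

theorem qBin_zero_right (q : K) (n : ℕ) : qBin q n 0 = 1 := by
  simp [qBin_of_le (Nat.zero_le n), qP_zero]

theorem qBin_mul_qP {n k : ℕ} (hk : qP q q k ≠ 0) :
    qBin q n k * qP q q k = qP (q ^ (n + 1 - k)) q k := by
  rcases le_or_gt k n with h | h
  · rw [qBin_of_le h, div_mul_cancel₀ _ hk, Nat.sub_add_comm h]
  · rw [qBin_of_lt h, zero_mul, show n + 1 - k = 0 by omega, pow_zero, qP_one_left q (by omega)]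

theorem qBin_succ_succ {n k : ℕ} (hq : ∀ j, 0 < j → j ≤ k + 1 → q ^ j ≠ 1) :
    qBin q (n + 1) (k + 1) = qBin q n (k + 1) + q ^ (n - k) * qBin q n k := by
  rcases lt_or_ge n k with h | h
  · rw [qBin_of_lt h, qBin_of_lt (by omega), qBin_of_lt (by omega)]
    ring
  have hk1 : qP q q (k + 1) ≠ 0 := qP_self_ne_zero hq
  have hk : qP q q k ≠ 0 := qP_self_ne_zero fun j hj hjk => hq j hj (by omega)
  have hsplit : q ^ (n - k) * q ^ (k + 1) = q ^ (n + 1) := by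
    rw [← pow_add]; congr 1; omega
  apply mul_right_cancel₀ hk1
  rw [add_mul, mul_assoc, qBin_mul_qP hk1, qBin_mul_qP hk1, qP_succ q q k,
    ← mul_assoc (qBin q n k), qBin_mul_qP hk, show n + 1 + 1 - (k + 1) = n + 1 - k by omega,
    show n + 1 - (k + 1) = n - k by omega, qP_succ, qP_succ', ← pow_succ, ← pow_add,
    show n - k + 1 = n + 1 - k by omega, show n + 1 - k + k = n + 1 by omega]
  linear_combination qP (q ^ (n + 1 - k)) q k * hsplit

theorem qBin_symm {n k : ℕ} (hq : ∀ j, 0 < j → j ≤ n → q ^ j ≠ 1) (hk : k ≤ n) :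
    qBin q n (n - k) = qBin q n k := by
  have hqk : ∀ {i}, i ≤ n → qP q q i ≠ 0 := fun hi =>
    qP_self_ne_zero fun j hj hji => hq j hj (by omega)
  have h1 := qBin_mul_qP (n := n) (hqk hk)
  have h2 := qBin_mul_qP (n := n) (hqk (Nat.sub_le n k))
  have h3 := qP_self_mul_qP q (n - k) k
  have h4 := qP_self_mul_qP q k (n - k)
  rw [show n + 1 - (n - k) = k + 1 by omega] at h2
  rw [Nat.sub_add_cancel hk] at h3
  rw [Nat.add_sub_cancel' hk] at h4
  rw [show n + 1 - k = n - k + 1 by omega] at h1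
  apply mul_right_cancel₀ (mul_ne_zero (hqk hk) (hqk (Nat.sub_le n k)))
  linear_combination qP q q k * h2 - qP q q (n - k) * h1 + h4 - h3

/-- The `q`-Vandermonde identity. -/
theorem qBin_add_eq_sum {h : ℕ} (hq : ∀ j, 0 < j → j ≤ h → q ^ j ≠ 1) (a b : ℕ) :
    qBin q (a + b) h =
      ∑ ij ∈ antidiagonal h, qBin q a ij.1 * qBin q b ij.2 * q ^ ((a - ij.1) * ij.2) := by
  induction b generalizing h with
  | zero =>
    cases h with
    | zero => simp [qBin_zero_right]
    | succ h =>
      rw [Nat.sum_antidiagonal_succ',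
        sum_eq_zero fun ij _ => by rw [qBin_of_lt (n := 0) ij.2.succ_pos]; ring]
      simp [qBin_zero_right]
  | succ b ih =>
    cases h with
    | zero => simp [qBin_zero_right]
    | succ h =>
      have hterm : ∀ ij ∈ antidiagonal h, qBin q a ij.1 * (q ^ (b - ij.2) * qBin q b ij.2) *
          q ^ ((a - ij.1) * (ij.2 + 1)) =
          q ^ (a + b - h) * (qBin q a ij.1 * qBin q b ij.2 * q ^ ((a - ij.1) * ij.2)) := by
        rintro ⟨i, j⟩ hij
        rw [HasAntidiagonal.mem_antidiagonal] at hij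
        rcases lt_or_ge a i with hi | hi
        · rw [qBin_of_lt hi]; ring
        rcases lt_or_ge b j with hj | hj
        · rw [qBin_of_lt hj]; ring
        have hexp : q ^ (b - j) * q ^ ((a - i) * (j + 1)) =
            q ^ (a + b - h) * q ^ ((a - i) * j) := by
          rw [← pow_add, ← pow_add, mul_add_one]
          congr 1
          omega
        linear_combination qBin q a i * qBin q b j * hexp
      rw [← add_assoc, qBin_succ_succ hq, ih hq, ih fun j hj hjh => hq j hj (by omega),
        Nat.sum_antidiagonal_succ', Nat.sum_antidiagonal_succ', mul_sum, ← sum_congr rfl hterm]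
      simp only [qBin_zero_right, add_assoc, ← sum_add_distrib]
      congr 1
      refine sum_congr rfl fun ij hij => ?_
      have hij' := HasAntidiagonal.mem_antidiagonal.1 hij
      rw [qBin_succ_succ fun j hj hjh => hq j hj (by omega)]
      ring

theorem sum_pow_mul_qBin_mul_qBin {a b s : ℕ} (hq : ∀ j, 0 < j → j ≤ a + s → q ^ j ≠ 1) :
    ∑ k ∈ range (a + 1), q ^ (k * (k + s)) * (qBin q a k * qBin q b (k + s)) =
      qBin q (a + b) (a + s) := by
  rw [qBin_add_eq_sum hq, ← Nat.sum_antidiagonal_swap, Nat.sum_antidiagonal_eq_sum_range_succ_mk,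
    show (a + s).succ = s + (a + 1) by omega, sum_range_add _ s (a + 1)]
  simp only [Prod.swap_prod_mk]
  rw [sum_eq_zero (s := range s) fun j hj => by
      rw [qBin_of_lt (n := a) (by simp at hj; omega)]; ring, zero_add]
  refine sum_congr rfl fun k hk => ?_
  have hka : k ≤ a := Nat.lt_succ_iff.1 (mem_range.1 hk)
  rw [show a + s - (s + k) = a - k by omega, show a - (a - k) = k by omega,
    qBin_symm (fun j hj hja => hq j hj (by omega)) hka, add_comm s k]
  ring

theorem qP_div_qP_self_eq {u : ℕ} (ha : a * q ^ u = 1) (k : ℕ) :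
    qP a q k / qP q q k = (-a) ^ k * q ^ k.choose 2 * qBin q u k := by
  rcases le_or_gt k u with hk | hk
  · rw [qP_eq_of_mul_pow_eq_one ha hk, qBin_of_le hk, mul_div_assoc]
  · rw [qBin_of_lt hk, mul_zero, qP, prod_eq_zero (f := fun i => 1 - a * q ^ i) (mem_range.2 hk)
      (by rw [ha, sub_self]), zero_div]

theorem IsPrimitiveRoot.qBin_sub_one {ω : K} {p j : ℕ} (hω : IsPrimitiveRoot ω p)
    (hj : j < p) :
    qBin ω (p - 1) j = (-1) ^ j * (ω ^ (j + 1).choose 2)⁻¹ := by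
  have hq : ∀ i, 0 < i → i ≤ j → ω ^ i ≠ 1 := fun i hi hij =>
    hω.pow_ne_one_of_pos_of_lt hi.ne' (by omega)
  have ha : ω ^ (p - j) * ω ^ j = 1 := by
    rw [← pow_add, Nat.sub_add_cancel hj.le, hω.pow_eq_one]
  have hexp : ω ^ j.choose 2 * ω ^ (j + 1).choose 2 = (ω ^ j) ^ j := by
    rw [← pow_add, ← pow_mul, Nat.choose_succ_succ', Nat.choose_one_right,
      ← Nat.two_mul_choose_two_add_self]
    ring_nf
  rw [qBin_of_le (by omega), show p - 1 - j + 1 = p - j by omega,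
    qP_eq_of_mul_pow_eq_one ha le_rfl, Nat.sub_self, zero_add, pow_one, mul_div_assoc,
    div_self (qP_self_ne_zero hq), mul_one,
    eq_mul_inv_iff_mul_eq₀ (pow_ne_zero _ (hω.ne_zero (by omega))), mul_assoc, hexp, neg_pow,
    mul_assoc, ← mul_pow, ha, one_pow, mul_one]

theorem qP_mul_qP_div_eq {b : K} {t t' : ℕ} (ha : a * q ^ t = 1) (hb : b * q ^ t' = 1)
    (hab : a * b = q) (k s : ℕ) :
    qP a q k * qP b q (k + s) / (qP q q k * qP q q (k + s)) =
      (-b) ^ s * q ^ s.choose 2 * (q ^ (k * (k + s)) * (qBin q t k * qBin q t' (k + s))) := by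
  have hsign : (-a) ^ k * (-b) ^ (k + s) = (-b) ^ s * q ^ k := by
    rw [pow_add, ← mul_assoc, ← mul_pow, neg_mul_neg, hab]
    ring
  have hexp : q ^ k * q ^ k.choose 2 * q ^ (k + s).choose 2 =
      q ^ s.choose 2 * q ^ (k * (k + s)) := by
    simp only [← pow_add]
    congr 1
    rw [Nat.choose_two_add]
    linarith [Nat.two_mul_choose_two_add_self k]
  rw [← div_mul_div_comm, qP_div_qP_self_eq ha, qP_div_qP_self_eq hb]
  linear_combination qBin q t k * qBin q t' (k + s) *
    (q ^ k.choose 2 * q ^ (k + s).choose 2 * hsign + (-b) ^ s * hexp)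

theorem IsPrimitiveRoot.add_add_one_eq {ω a b : K} {p t t' : ℕ} (hω : IsPrimitiveRoot ω p)
    (ha : a * ω ^ t = 1) (hb : b * ω ^ t' = 1) (hab : a * b = ω) (ht : t < p) (ht' : t' < p) :
    t + t' + 1 = p := by
  have h1 : ω ^ (t + t' + 1) = 1 := by
    rw [pow_succ, pow_add]
    linear_combination -ω ^ t * ω ^ t' * hab + b * ω ^ t' * ha + hb
  obtain ⟨c, hc⟩ := hω.dvd_of_pow_eq_one _ h1
  rcases c with _ | _ | c
  · omega
  · omega
  · nlinarith

theorem sum_qP_mul_qP_div_eq {ω a b : K} {p t t' s : ℕ} (hω : IsPrimitiveRoot ω p)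
    (ha : a * ω ^ t = 1) (hb : b * ω ^ t' = 1) (hab : a * b = ω) (ht : t < p) (ht' : t' < p)
    (hs : s ≤ t') :
    ∑ k ∈ range (p - s), qP a ω k * qP b ω (k + s) / (qP ω ω k * qP ω ω (k + s)) =
      (-1) ^ t * (ω ^ (t + 1).choose 2)⁻¹ := by
  have hp : t + t' + 1 = p := hω.add_add_one_eq ha hb hab ht ht'
  have hq : ∀ j, 0 < j → j ≤ t + s → ω ^ j ≠ 1 := fun j hj hjts =>
    hω.pow_ne_one_of_pos_of_lt hj.ne' (by omega)
  have hb' : b = ω ^ (t + 1) := by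
    rw [← mul_one b, ← hω.pow_eq_one, ← hp, show t + t' + 1 = t' + (t + 1) by omega, pow_add,
      ← mul_assoc, hb, one_mul]
  have hvanish : ∀ k ∈ range (p - s), k ∉ range (t + 1) →
      (-b) ^ s * ω ^ s.choose 2 * (ω ^ (k * (k + s)) * (qBin ω t k * qBin ω t' (k + s))) = 0 :=
    fun k _ hk => by rw [qBin_of_lt (by simpa using hk)]; ring
  have hchoose : (ω ^ (t + 1)) ^ s * ω ^ s.choose 2 * ω ^ (t + 1).choose 2 =
      ω ^ (t + s + 1).choose 2 := by
    rw [← pow_mul, ← pow_add, ← pow_add, show t + s + 1 = t + 1 + s by omega,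
      Nat.choose_two_add (t + 1) s]
    ring_nf
  have hsign : (-1 : K) ^ s * (-1) ^ s = 1 := by rw [← pow_add, Even.neg_one_pow ⟨s, rfl⟩]
  have hω0 : ω ≠ 0 := hω.ne_zero (by omega)
  rw [sum_congr rfl fun k _ => qP_mul_qP_div_eq ha hb hab k s,
    ← sum_subset (range_subset_range.2 (by omega)) hvanish, ← mul_sum,
    sum_pow_mul_qBin_mul_qBin hq, show t + t' = p - 1 by omega, hω.qBin_sub_one (by omega),
    ← hchoose, hb']
  field_simp
  rw [neg_pow, pow_add]
  linear_combination (ω ^ (t + 1)) ^ s * (-1) ^ t * hsign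

end QPochhammer

section ValueAt

variable {F K : Type*} [Field F] [Field K] [Algebra F K]

def HasValueAt (f : RatFunc F) (x v : K) : Prop :=
  ∃ N D : F[X], aeval x D ≠ 0 ∧
    f = algebraMap F[X] (RatFunc F) N / algebraMap F[X] (RatFunc F) D ∧ v = aeval x N / aeval x D

variable {f g : RatFunc F} {x v w : K}

theorem algebraMap_ne_zero_of_aeval_ne_zero {D : F[X]} (hD : aeval x D ≠ 0) :
    algebraMap F[X] (RatFunc F) D ≠ 0 :=
  RatFunc.algebraMap_ne_zero fun h => hD (by rw [h, map_zero])

theorem hasValueAt_algebraMap (x : K) (P : F[X]) :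
    HasValueAt (algebraMap F[X] (RatFunc F) P) x (aeval x P) :=
  ⟨P, 1, by simp, by simp, by simp⟩

theorem hasValueAt_X (x : K) : HasValueAt (RatFunc.X : RatFunc F) x x := by
  simpa using hasValueAt_algebraMap (F := F) x X

theorem hasValueAt_one (x : K) : HasValueAt (1 : RatFunc F) x 1 := by
  simpa using hasValueAt_algebraMap (F := F) x 1

theorem HasValueAt.neg (hf : HasValueAt f x v) : HasValueAt (-f) x (-v) := by
  obtain ⟨N, D, hD, rfl, rfl⟩ := hf
  exact ⟨-N, D, hD, by simp [neg_div], by simp [neg_div]⟩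

theorem HasValueAt.add (hf : HasValueAt f x v) (hg : HasValueAt g x w) :
    HasValueAt (f + g) x (v + w) := by
  obtain ⟨N₁, D₁, hD₁, rfl, rfl⟩ := hf
  obtain ⟨N₂, D₂, hD₂, rfl, rfl⟩ := hg
  refine ⟨N₁ * D₂ + D₁ * N₂, D₁ * D₂, by simpa using mul_ne_zero hD₁ hD₂, ?_, ?_⟩
  · rw [div_add_div _ _ (algebraMap_ne_zero_of_aeval_ne_zero hD₁)
      (algebraMap_ne_zero_of_aeval_ne_zero hD₂)]
    simp
  · rw [div_add_div _ _ hD₁ hD₂]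
    simp

theorem HasValueAt.sub (hf : HasValueAt f x v) (hg : HasValueAt g x w) :
    HasValueAt (f - g) x (v - w) := by
  simpa only [sub_eq_add_neg] using hf.add hg.neg

theorem HasValueAt.mul (hf : HasValueAt f x v) (hg : HasValueAt g x w) :
    HasValueAt (f * g) x (v * w) := by
  obtain ⟨N₁, D₁, hD₁, rfl, rfl⟩ := hf
  obtain ⟨N₂, D₂, hD₂, rfl, rfl⟩ := hg
  exact ⟨N₁ * N₂, D₁ * D₂, by simpa using mul_ne_zero hD₁ hD₂, by simp [div_mul_div_comm],
    by simp [div_mul_div_comm]⟩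

theorem HasValueAt.inv (hf : HasValueAt f x v) (hv : v ≠ 0) : HasValueAt f⁻¹ x v⁻¹ := by
  obtain ⟨N, D, hD, rfl, rfl⟩ := hf
  exact ⟨D, N, (div_ne_zero_iff.1 hv).1, by rw [inv_div], by rw [inv_div]⟩

theorem HasValueAt.div (hf : HasValueAt f x v) (hg : HasValueAt g x w) (hw : w ≠ 0) :
    HasValueAt (f / g) x (v / w) := by
  simpa only [div_eq_mul_inv] using hf.mul (hg.inv hw)

theorem HasValueAt.pow (hf : HasValueAt f x v) (n : ℕ) : HasValueAt (f ^ n) x (v ^ n) := by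
  induction n with
  | zero => simpa using hasValueAt_one x
  | succ n ih => simpa only [pow_succ] using ih.mul hf

theorem HasValueAt.sum {ι : Type*} {s : Finset ι} {f : ι → RatFunc F} {v : ι → K}
    (h : ∀ i ∈ s, HasValueAt (f i) x (v i)) : HasValueAt (∑ i ∈ s, f i) x (∑ i ∈ s, v i) := by
  classical
  induction s using Finset.induction_on with
  | empty => simpa using hasValueAt_algebraMap (F := F) x 0
  | insert i s hi ih =>
    rw [sum_insert hi, sum_insert hi]
    exact (h i (mem_insert_self i s)).add (ih fun j hj => h j (mem_insert_of_mem hj))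

theorem HasValueAt.prod {ι : Type*} {s : Finset ι} {f : ι → RatFunc F} {v : ι → K}
    (h : ∀ i ∈ s, HasValueAt (f i) x (v i)) : HasValueAt (∏ i ∈ s, f i) x (∏ i ∈ s, v i) := by
  classical
  induction s using Finset.induction_on with
  | empty => simpa using hasValueAt_one (F := F) x
  | insert i s hi ih =>
    rw [prod_insert hi, prod_insert hi]
    exact (h i (mem_insert_self i s)).mul (ih fun j hj => h j (mem_insert_of_mem hj))

theorem HasValueAt.qP {a q : RatFunc F} {va vq : K} (ha : HasValueAt a x va)
    (hq : HasValueAt q x vq) (n : ℕ) : HasValueAt (qP a q n) x (qP va vq n) :=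
  HasValueAt.prod fun i _ => (hasValueAt_one x).sub (ha.mul (hq.pow i))

end ValueAt

theorem HasValueAt.congrModPow_one {K : Type*} [Field K] [CharZero K] {p : ℕ} (hp : p.Prime)
    {ζ : K} (hζ : IsPrimitiveRoot ζ p) {f g : RatFunc ℚ} {v : K} (hf : HasValueAt f ζ v)
    (hg : HasValueAt g ζ v) : CongrModPow f g p 1 := by
  have : Fact p.Prime := ⟨hp⟩
  obtain ⟨N₁, D₁, hD₁, rfl, hv₁⟩ := hf
  obtain ⟨N₂, D₂, hD₂, rfl, hv₂⟩ := hg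
  have hmin : Phi p = minpoly ℚ ζ := by
    rw [Phi, ← cyclotomic_prime, cyclotomic_eq_minpoly_rat hζ hp.pos]
  have hdvd : Phi p ∣ N₁ * D₂ - N₂ * D₁ := by
    rw [hmin]
    refine minpoly.dvd ℚ ζ ?_
    have h := hv₁.symm.trans hv₂
    rw [div_eq_div_iff hD₁ hD₂] at h
    simp [h]
  obtain ⟨A, hA⟩ := hdvd
  refine ⟨A, D₁ * D₂, ?_, ?_⟩
  · have hirr : Irreducible (Phi p) := by
      rw [Phi, ← cyclotomic_prime]
      exact cyclotomic.irreducible_rat hp.pos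
    refine (hirr.coprime_iff_not_dvd.2 fun h => ?_).symm
    rw [hmin] at h
    exact mul_ne_zero hD₁ hD₂ (by simpa using (minpoly.dvd_iff).1 h)
  · rw [pow_one, ← hA, map_mul, map_sub, map_mul, map_mul]
    have h₁ := algebraMap_ne_zero_of_aeval_ne_zero hD₁
    have h₂ := algebraMap_ne_zero_of_aeval_ne_zero hD₂
    field_simp

theorem stmt_17_general (p m r : ℕ) (hp : p.Prime) (hpm : ¬ p ∣ m)
    (hrm : r < m) (t t' s : ℕ)
    (ht : t < p) (htdef : (m * t + r) % p = 0)
    (ht' : t' < p) (ht'def : (m * t' + (m - r)) % p = 0)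
    (hs : s ≤ t') :
    CongrModPow
      (∑ k ∈ Finset.range (p - s),
        qP (qq ^ r) (qq ^ m) k * qP (qq ^ (m - r)) (qq ^ m) (k + s) /
          (qP (qq ^ m) (qq ^ m) k * qP (qq ^ m) (qq ^ m) (k + s)))
      ((-1) ^ t * qq ^ (-((m : ℤ) * t * (t + 1) / 2))) p 1 := by
  have hζ := Complex.isPrimitiveRoot_exp p hp.ne_zero
  set ζ := Complex.exp (2 * Real.pi * Complex.I / p)
  have hω : IsPrimitiveRoot (ζ ^ m) p :=
    hζ.pow_of_coprime m (Nat.Coprime.symm ((Nat.Prime.coprime_iff_not_dvd hp).2 hpm))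
  have ha : ζ ^ r * (ζ ^ m) ^ t = 1 := by
    rw [← pow_mul, ← pow_add, hζ.pow_eq_one_iff_dvd, add_comm]
    exact Nat.dvd_of_mod_eq_zero htdef
  have hb : ζ ^ (m - r) * (ζ ^ m) ^ t' = 1 := by
    rw [← pow_mul, ← pow_add, hζ.pow_eq_one_iff_dvd, add_comm]
    exact Nat.dvd_of_mod_eq_zero ht'def
  have hab : ζ ^ r * ζ ^ (m - r) = ζ ^ m := by rw [← pow_add, Nat.add_sub_cancel' hrm.le]
  have hX : HasValueAt qq ζ ζ := hasValueAt_X ζ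
  have hden : ∀ k, k < p → qP (ζ ^ m) (ζ ^ m) k ≠ 0 := fun k hk =>
    qP_self_ne_zero fun j hj hjk => hω.pow_ne_one_of_pos_of_lt hj.ne' (by omega)
  have hlhs := HasValueAt.sum fun k (hk : k ∈ range (p - s)) =>
    (((hX.pow r).qP (hX.pow m) k).mul ((hX.pow (m - r)).qP (hX.pow m) (k + s))).div
      (((hX.pow m).qP (hX.pow m) k).mul ((hX.pow m).qP (hX.pow m) (k + s)))
      (mul_ne_zero (hden k (by simp at hk; omega)) (hden (k + s) (by simp at hk; omega)))
  rw [sum_qP_mul_qP_div_eq hω ha hb hab ht ht' hs] at hlhs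
  refine hlhs.congrModPow_one hp hζ ?_
  have hexp : (m : ℤ) * t * (t + 1) / 2 = (m * (t + 1).choose 2 : ℕ) := by
    have h : (2 * (t + 1).choose 2 + (t + 1) : ℤ) = (t + 1) * (t + 1) := by
      exact_mod_cast Nat.two_mul_choose_two_add_self (t + 1)
    rw [Int.ediv_eq_of_eq_mul_right two_ne_zero]
    push_cast
    linear_combination (-(m : ℤ)) * h
  rw [hexp, zpow_neg, zpow_natCast, pow_mul]
  exact ((hasValueAt_one ζ).neg.pow t).mul
    (((hX.pow m).pow _).inv (pow_ne_zero _ (hω.ne_zero hp.ne_zero)))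

theorem stmt_17 (p m r : ℕ) (hp : p.Prime) (hodd : Odd p) (hpm : ¬ p ∣ m)
    (hr : 0 < r) (hrm : r < m) (t t' s : ℕ)
    (ht : t < p) (htdef : (m * t + r) % p = 0)
    (ht' : t' < p) (ht'def : (m * t' + (m - r)) % p = 0)
    (hs : s ≤ t') :
    CongrModPow
      (∑ k ∈ Finset.range (p - s),
        qP (qq ^ r) (qq ^ m) k * qP (qq ^ (m - r)) (qq ^ m) (k + s) /
          (qP (qq ^ m) (qq ^ m) k * qP (qq ^ m) (qq ^ m) (k + s)))
      ((-1) ^ t * qq ^ (-((m : ℤ) * t * (t + 1) / 2))) p 1 :=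
  stmt_17_general p m r hp hpm hrm t t' s ht htdef ht' ht'def hs
end
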